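/- Let N ≥ 2, 0 < k < N, and 1 ≤ j. The number of paths w : Fin N → Bool with w(0) = false, w(N−1) = true, exactly k visits to S1, and exactly j ascents equals C(k−1, j−1)·C(N−k−1, j−1). (Such a path consists of j maximal blocks of trues and j maximal blocks of falses; distributing k trues over j nonempty blocks and N−k falses over j nonempty blocks gives the two weak-composition counts.) -/

import Mathlib

open Finset

/-- Transition probability of the two-state chain: `false` is S0, `true` is S1. -/
def mcStep (p00 p01 p10 p11 : ℝ) : Bool → Bool → ℝ
  | false, false => p00
  | false, true  => p01
  | true,  false => p10
  | true,  true  => p11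

/-- Weight of a path `w : Fin N → Bool`: product over `i = 0, …, N-2` of the
transition probability from `w i` to `w (i+1)`; equals `1` when `N = 1`. -/
def pathWeight (p00 p01 p10 p11 : ℝ) {N : ℕ} (w : Fin N → Bool) : ℝ :=
  ∏ i : Fin (N - 1),
    mcStep p00 p01 p10 p11
      (w ⟨i.val, by have := i.isLt; omega⟩)
      (w ⟨i.val + 1, by have := i.isLt; omega⟩)

/-- Number of visits to S1 (i.e. `true`) of a path. -/
def visitsS1 {N : ℕ} (w : Fin N → Bool) : ℕ :=
  (Finset.univ.filter fun i : Fin N => w i = true).card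

/-- Number of descents (indices `i ≤ N-2` with `w i = true` and `w (i+1) = false`). -/
def descents {N : ℕ} (w : Fin N → Bool) : ℕ :=
  (Finset.univ.filter fun i : Fin (N - 1) =>
    w ⟨i.val, by have := i.isLt; omega⟩ = true ∧
    w ⟨i.val + 1, by have := i.isLt; omega⟩ = false).card

/-- Number of ascents (indices `i ≤ N-2` with `w i = false` and `w (i+1) = true`). -/
def ascents {N : ℕ} (w : Fin N → Bool) : ℕ :=
  (Finset.univ.filter fun i : Fin (N - 1) =>
    w ⟨i.val, by have := i.isLt; omega⟩ = false ∧
    w ⟨i.val + 1, by have := i.isLt; omega⟩ = true).card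

/-!
Appending a state to a path starting in S0 adds one visit if the new state is S1, and one ascent
if the step is S0 → S1. So the numbers of paths ending in S1, resp. S0, with prescribed visits and
ascents satisfy Pascal-type recursions in the length, and the product-of-binomials closed forms
satisfy the same recursions by Pascal's rule in one of the two factors.
-/

theorem ascents_eq_card {n : ℕ} (w : Fin (n + 1) → Bool) :
    ascents w = #{i : Fin n | w i.castSucc = false ∧ w i.succ = true} := rfl

theorem visitsS1_snoc {n : ℕ} (v : Fin n → Bool) (b : Bool) :
    visitsS1 (Fin.snoc v b : Fin (n + 1) → Bool) = visitsS1 v + b.toNat := by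
  simp only [visitsS1, card_filter, Fin.sum_univ_castSucc, Fin.snoc_castSucc, Fin.snoc_last]
  cases b <;> rfl

theorem ascents_snoc {n : ℕ} (v : Fin (n + 1) → Bool) (b : Bool) :
    ascents (Fin.snoc v b : Fin (n + 2) → Bool) = ascents v + (!v (Fin.last n) && b).toNat := by
  simp only [ascents_eq_card, card_filter, Fin.sum_univ_castSucc, Fin.succ_castSucc,
    Fin.snoc_castSucc, Fin.snoc_last, Fin.succ_last]
  congr 1
  cases v (Fin.last n) <;> cases b <;> rfl

theorem card_filter_snoc {α : Type*} [Fintype α] [DecidableEq α] {n : ℕ} (a : α)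
    (P : (Fin (n + 1) → α) → Prop) [DecidablePred P] :
    #{w : Fin (n + 1) → α | w (Fin.last n) = a ∧ P w} =
      #{v : Fin n → α | P (Fin.snoc v a)} := by
  have snoc_init {w : Fin (n + 1) → α} (hw : w (Fin.last n) = a) :
      Fin.snoc (Fin.init w) a = w := by
    rw [← hw, Fin.snoc_init_self]
  refine card_nbij' Fin.init (Fin.snoc · a) ?_ (fun v hv => by simpa using hv) ?_
    (fun v _ => Fin.init_snoc _ _)
  · intro w hw
    simp only [coe_filter, mem_univ, true_and, Set.mem_ofPred_eq] at hw ⊢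
    rw [snoc_init hw.1]
    exact hw.2
  · intro w hw
    simp only [coe_filter, mem_univ, true_and, Set.mem_ofPred_eq] at hw
    exact snoc_init hw.1

def pathCount (n k j : ℕ) (e : Bool) : ℕ :=
  #{w : Fin (n + 1) → Bool |
    w 0 = false ∧ w (Fin.last n) = e ∧ visitsS1 w = k ∧ ascents w = j}

theorem pathCount_succ (n k j : ℕ) (e : Bool) :
    pathCount (n + 1) k j e = ∑ b : Bool,
      #{v : Fin (n + 1) → Bool | v 0 = false ∧ v (Fin.last n) = b ∧
        visitsS1 v + e.toNat = k ∧ ascents v + (!b && e).toNat = j} := by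
  rw [pathCount, filter_congr (fun w _ => and_left_comm), card_filter_snoc,
    card_eq_sum_card_fiberwise (f := fun v => v (Fin.last n)) (t := univ) fun _ _ => mem_univ _]
  refine sum_congr rfl fun b _ => congrArg card ?_
  rw [filter_filter]
  refine filter_congr fun v _ => ?_
  rw [visitsS1_snoc, ascents_snoc, ← Fin.castSucc_zero, Fin.snoc_castSucc]
  constructor
  · rintro ⟨⟨h0, hk, hj⟩, rfl⟩; exact ⟨h0, rfl, hk, hj⟩
  · rintro ⟨h0, rfl, hk, hj⟩; exact ⟨⟨h0, hk, hj⟩, rfl⟩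

theorem pathCount_succ_false (n k j : ℕ) :
    pathCount (n + 1) k j false = pathCount n k j true + pathCount n k j false := by
  rw [pathCount_succ]
  simp [pathCount]

theorem pathCount_succ_zero_true (n j : ℕ) : pathCount (n + 1) 0 j true = 0 := by
  simp [pathCount_succ]

theorem pathCount_succ_succ_zero_true (n k : ℕ) :
    pathCount (n + 1) (k + 1) 0 true = pathCount n k 0 true := by
  rw [pathCount_succ]
  simp [pathCount]

theorem pathCount_succ_succ_succ_true (n k j : ℕ) :
    pathCount (n + 1) (k + 1) (j + 1) true =
      pathCount n k (j + 1) true + pathCount n k j false := by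
  rw [pathCount_succ]
  simp [pathCount]

theorem pathCount_zero (k j : ℕ) (e : Bool) :
    pathCount 0 k j e = if e = false ∧ k = 0 ∧ j = 0 then 1 else 0 := by
  have hvisits (w : Fin 1 → Bool) : visitsS1 w = (w 0).toNat := by
    cases h : w 0 <;> simp [visitsS1, h, Fin.eq_zero]
  have hascents (w : Fin 1 → Bool) : ascents w = 0 := rfl
  simp only [pathCount, hvisits, hascents, Fin.last_zero]
  split_ifs with h
  · obtain ⟨rfl, rfl, rfl⟩ := h
    decide
  · refine card_eq_zero.2 (filter_eq_empty_iff.2 fun w _ => ?_)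
    rintro ⟨h0, rfl, rfl, rfl⟩
    simp [h0] at h

/-- Stars and bars: `k + 1` visits to S1 form `j + 1` blocks, and the `n - k` visits to S0 form
`j + 1` blocks if the path ends in S1, `j + 2` if it ends in S0. -/
def pathFormula : ℕ → ℕ → ℕ → Bool → ℕ
  | n, k + 1, j + 1, true => if k < n then k.choose j * (n - k - 1).choose j else 0
  | n, k + 1, j + 1, false => k.choose j * (n - k - 1).choose (j + 1)
  | _, 0, 0, false => 1
  | _, _, _, _ => 0

theorem pathFormula_succ_false (n k j : ℕ) :
    pathFormula (n + 1) k j false = pathFormula n k j true + pathFormula n k j false := by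
  rcases k with _ | k <;> rcases j with _ | j <;> simp only [pathFormula]
  split_ifs with hk
  · rw [show n + 1 - k - 1 = n - k - 1 + 1 by omega, Nat.choose_succ_succ', mul_add]
  · simp [show n + 1 - k - 1 = 0 by omega, show n - k - 1 = 0 by omega]

theorem pathFormula_succ_succ_succ_true (n k j : ℕ) :
    pathFormula (n + 1) (k + 1) (j + 1) true =
      pathFormula n k (j + 1) true + pathFormula n k j false := by
  rcases k with _ | k <;> rcases j with _ | j <;>
    simp only [pathFormula, Nat.add_lt_add_iff_right, Nat.add_sub_add_right]
  case zero.zero | zero.succ | succ.zero => simp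
  split_ifs with hk
  · rw [Nat.choose_succ_succ', add_mul, add_comm]
  · simp [show n - k - 1 = 0 by omega]

theorem pathCount_eq_pathFormula (n k j : ℕ) (e : Bool) :
    pathCount n k j e = pathFormula n k j e := by
  induction n generalizing k j e with
  | zero =>
    rw [pathCount_zero]
    rcases e with _ | _ <;> rcases k with _ | k <;> rcases j with _ | j <;> simp [pathFormula]
  | succ n ih =>
    rcases e with _ | _
    · rw [pathCount_succ_false, pathFormula_succ_false, ih, ih]
    rcases k with _ | k
    · rw [pathCount_succ_zero_true]; cases j <;> rfl
    rcases j with _ | j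
    · rw [pathCount_succ_succ_zero_true, ih]; rcases k <;> rfl
    · rw [pathCount_succ_succ_succ_true, pathFormula_succ_succ_succ_true, ih, ih]

theorem stmt10 (N k j : ℕ) (hk0 : 0 < k) (hkN : k < N) (hj : 1 ≤ j) :
    (Finset.univ.filter (fun w : Fin N → Bool =>
        w ⟨0, by omega⟩ = false ∧ w ⟨N - 1, by omega⟩ = true ∧
        visitsS1 w = k ∧ ascents w = j)).card =
    Nat.choose (k - 1) (j - 1) * Nat.choose (N - k - 1) (j - 1) := by
  obtain ⟨n, rfl⟩ : ∃ n, N = n + 1 := ⟨N - 1, by omega⟩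
  obtain ⟨k, rfl⟩ : ∃ k', k = k' + 1 := ⟨k - 1, by omega⟩
  obtain ⟨j, rfl⟩ : ∃ j', j = j' + 1 := ⟨j - 1, by omega⟩
  have hk : k < n := by omega
  change pathCount n (k + 1) (j + 1) true = _
  simp [pathCount_eq_pathFormula, pathFormula, hk]
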